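/- arXiv:1111.0194 — 2 statements merged into one kernel-verified Lean document; each statement's English description precedes it below -/
import Mathlib

section
/- Under the setup of the absolute-error single-step lemma, with x* a minimizer of f and any h ≥ 0: E_u[f(x₊) − f(x*)] ≤ (1 − h/n)(f(x) − f(x*)) + (L₁h²/(2n))‖x* − x‖² + L₁μ²/2. -/
/-!
Along the random direction `u`, exact line search does at least as well as the step
`h⟪x* - x, u⟫`, which the quadratic upper bound controls by
`f x + h⟪x* - x, u⟫⟪∇f x, u⟫ + L₁h²⟪x* - x, u⟫²/2`; the approximate step loses at most `L₁μ²/2`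
more, because the directional derivative vanishes at the exact minimiser. Rotation invariance of
the law of `u` gives `E[⟪a, u⟫⟪b, u⟫] = ⟪a, b⟫ / n`, and convexity bounds
`⟪∇f x, x* - x⟫ ≤ f x* - f x`. The bound also holds when the integrand is not integrable, since it
is squeezed between `0` and an integrable majorant.
-/

open MeasureTheory ProbabilityTheory
open scoped RealInnerProductSpace

section SphereMoments

variable {E : Type*} [NormedAddCommGroup E] [InnerProductSpace ℝ E] [MeasurableSpace E]
  [BorelSpace E] {ν : Measure E}

theorem integrable_inner_mul_inner_of_ae_norm_eq_one [IsFiniteMeasure ν]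
    (hsphere : ∀ᵐ u ∂ν, ‖u‖ = 1) (a b : E) :
    Integrable (fun u => ⟪a, u⟫ * ⟪b, u⟫) ν := by
  refine Integrable.mono' (integrable_const (‖a‖ * ‖b‖)) (by fun_prop) ?_
  filter_upwards [hsphere] with u hu
  rw [Real.norm_eq_abs, abs_mul]
  calc |⟪a, u⟫| * |⟪b, u⟫| ≤ (‖a‖ * ‖u‖) * (‖b‖ * ‖u‖) := by
        gcongr <;> exact abs_real_inner_le_norm _ _
    _ = ‖a‖ * ‖b‖ := by rw [hu]; ring

theorem integral_inner_sq_eq_of_norm_eq (hinv : ∀ e : E ≃ₗᵢ[ℝ] E, ν.map e = ν) {a b : E}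
    (hab : ‖a‖ = ‖b‖) : ∫ u, ⟪a, u⟫ ^ 2 ∂ν = ∫ u, ⟪b, u⟫ ^ 2 ∂ν := by
  set e : E ≃ₗᵢ[ℝ] E := Submodule.reflection (ℝ ∙ (a - b))ᗮ
  have hea : e a = b := Submodule.reflection_sub hab
  calc ∫ u, ⟪a, u⟫ ^ 2 ∂ν = ∫ u, ⟪e a, e u⟫ ^ 2 ∂ν := by simp only [e.inner_map_map]
    _ = ∫ u, ⟪b, u⟫ ^ 2 ∂(ν.map e) := by
        rw [integral_map e.continuous.aemeasurable (by fun_prop), hea]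
    _ = ∫ u, ⟪b, u⟫ ^ 2 ∂ν := by rw [hinv e]

variable [FiniteDimensional ℝ E] [IsProbabilityMeasure ν]

theorem finrank_mul_integral_inner_sq (hsphere : ∀ᵐ u ∂ν, ‖u‖ = 1)
    (hinv : ∀ e : E ≃ₗᵢ[ℝ] E, ν.map e = ν) (a : E) :
    Module.finrank ℝ E * ∫ u, ⟪a, u⟫ ^ 2 ∂ν = ‖a‖ ^ 2 := by
  set b := stdOrthonormalBasis ℝ E
  have hint (v : E) : Integrable (fun u => ⟪v, u⟫ ^ 2) ν := by
    simpa only [sq] using integrable_inner_mul_inner_of_ae_norm_eq_one hsphere v v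
  calc Module.finrank ℝ E * ∫ u, ⟪a, u⟫ ^ 2 ∂ν
      = ∑ i, ∫ u, ⟪‖a‖ • b i, u⟫ ^ 2 ∂ν := by
        rw [Finset.sum_congr rfl fun i _ => integral_inner_sq_eq_of_norm_eq hinv (a := ‖a‖ • b i)
          (b := a) (by simp [norm_smul])]
        simp
    _ = ∫ u, ‖a‖ ^ 2 * ‖u‖ ^ 2 ∂ν := by
        rw [← integral_finsetSum _ fun i _ => hint _]
        congr 1 with u
        simp only [real_inner_smul_left, mul_pow, ← Finset.mul_sum, b.sum_sq_inner_right]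
    _ = ‖a‖ ^ 2 := by
        rw [integral_congr_ae (g := fun _ => ‖a‖ ^ 2)
          (hsphere.mono fun u hu => by simp only [hu, one_pow, mul_one])]
        simp

theorem integral_inner_mul_inner (hsphere : ∀ᵐ u ∂ν, ‖u‖ = 1)
    (hinv : ∀ e : E ≃ₗᵢ[ℝ] E, ν.map e = ν) (a b : E) :
    ∫ u, ⟪a, u⟫ * ⟪b, u⟫ ∂ν = ⟪a, b⟫ / Module.finrank ℝ E := by
  obtain ⟨u, hu⟩ := hsphere.exists
  have : Nontrivial E := ⟨u, 0, by rintro rfl; simp at hu⟩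
  have hd : (Module.finrank ℝ E : ℝ) ≠ 0 := Nat.cast_ne_zero.2 Module.finrank_pos.ne'
  have hsq (v : E) : ∫ u, ⟪v, u⟫ ^ 2 ∂ν = ‖v‖ ^ 2 / Module.finrank ℝ E := by
    rw [← finrank_mul_integral_inner_sq hsphere hinv v, mul_div_cancel_left₀ _ hd]
  have hint (v : E) : Integrable (fun u => ⟪v, u⟫ ^ 2) ν := by
    simpa only [sq] using integrable_inner_mul_inner_of_ae_norm_eq_one hsphere v v
  have hpolar (u : E) : ⟪a, u⟫ * ⟪b, u⟫ = (⟪a + b, u⟫ ^ 2 - ⟪a - b, u⟫ ^ 2) / 4 := by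
    rw [inner_add_left, inner_sub_left]; ring
  simp_rw [hpolar]
  rw [integral_div, integral_sub (hint _) (hint _), hsq, hsq, norm_add_sq_real, norm_sub_sq_real]
  ring

end SphereMoments

section LineSearch

variable {E : Type*} [NormedAddCommGroup E] [InnerProductSpace ℝ E] {f : E → ℝ} {f' : E → E}
  {L : ℝ} {x u : E} {s : ℝ}

theorem inner_eq_zero_of_minimizer_along_line [CompleteSpace E] {g : E}
    (hgrad : HasGradientAt f g (x + s • u))
    (hmin : ∀ t : ℝ, f (x + s • u) ≤ f (x + t • u)) : ⟪g, u⟫ = 0 := by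
  have hline : HasDerivAt (fun t : ℝ => x + t • u) u s := by
    simpa using ((hasDerivAt_id s).smul_const u).const_add x
  have hderiv := hgrad.hasFDerivAt.comp_hasDerivAt s hline
  simp only [InnerProductSpace.toDual_apply_apply] at hderiv
  exact IsLocalMin.hasDerivAt_eq_zero (Filter.Eventually.of_forall hmin) hderiv

theorem le_of_minimizer_along_line_of_quadratic_upper_bound
    (hquad : ∀ x y, f y - f x - ⟪f' x, y - x⟫ ≤ L / 2 * ‖y - x‖ ^ 2) (hu : ‖u‖ = 1)
    (hmin : ∀ t : ℝ, f (x + s • u) ≤ f (x + t • u)) (t : ℝ) :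
    f (x + s • u) ≤ f x + t * ⟪f' x, u⟫ + L / 2 * t ^ 2 := by
  have hq := hquad x (x + t • u)
  rw [add_sub_cancel_left, real_inner_smul_right, norm_smul, hu, mul_one, Real.norm_eq_abs,
    sq_abs] at hq
  linarith [hmin t]

theorem le_add_of_abs_sub_le_of_minimizer_along_line [CompleteSpace E]
    (hdiff : ∀ x, HasGradientAt f (f' x) x)
    (hconv : ∀ x y, f x + ⟪f' x, y - x⟫ ≤ f y)
    (hquad : ∀ x y, f y - f x - ⟪f' x, y - x⟫ ≤ L / 2 * ‖y - x‖ ^ 2) (hu : ‖u‖ = 1)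
    (hmin : ∀ t : ℝ, f (x + s • u) ≤ f (x + t • u)) {s' μ : ℝ} (hs' : |s' - s| ≤ μ) :
    f (x + s' • u) ≤ f (x + s • u) + L * μ ^ 2 / 2 := by
  set p := x + s • u
  have hL : 0 ≤ L := by
    have hupper := hquad p (p + u)
    have hlower := hconv p (p + u)
    rw [add_sub_cancel_left, hu] at hupper
    rw [add_sub_cancel_left] at hlower
    linarith
  have hq := hquad p (x + s' • u)
  have hstep : x + s' • u - p = (s' - s) • u := by rw [sub_smul]; unfold p; abel
  rw [hstep, real_inner_smul_right, inner_eq_zero_of_minimizer_along_line (hdiff p) hmin, mul_zero,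
    norm_smul, hu, mul_one, Real.norm_eq_abs] at hq
  have : |s' - s| ^ 2 ≤ μ ^ 2 := pow_le_pow_left₀ (abs_nonneg _) hs' 2
  nlinarith

end LineSearch

theorem rp_single_step_opt_general (n : ℕ)
    (f : EuclideanSpace ℝ (Fin n) → ℝ)
    (f' : EuclideanSpace ℝ (Fin n) → EuclideanSpace ℝ (Fin n)) (L₁ : ℝ)
    (hdiff : ∀ x, HasGradientAt f (f' x) x)
    (hconv : ∀ x y, f x + ⟪f' x, y - x⟫ ≤ f y)
    (hquad : ∀ x y, f y - f x - ⟪f' x, y - x⟫ ≤ L₁ / 2 * ‖y - x‖ ^ 2)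
    (μs : Measure (EuclideanSpace ℝ (Fin n))) [IsProbabilityMeasure μs]
    (hsphere : ∀ᵐ u ∂μs, ‖u‖ = 1)
    (hinv : ∀ e : EuclideanSpace ℝ (Fin n) ≃ₗᵢ[ℝ] EuclideanSpace ℝ (Fin n), μs.map e = μs)
    (x : EuclideanSpace ℝ (Fin n)) (μ : ℝ)
    (xstar : EuclideanSpace ℝ (Fin n)) (hmin : ∀ y, f xstar ≤ f y)
    (hstar htilde : EuclideanSpace ℝ (Fin n) → ℝ)
    (hls : ∀ u, ∀ t : ℝ, f (x + hstar u • u) ≤ f (x + t • u))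
    (happ : ∀ u, |htilde u - hstar u| ≤ μ)
    (h : ℝ) (hh : 0 ≤ h) :
    ∫ u, (f (x + htilde u • u) - f xstar) ∂μs ≤
      (1 - h / n) * (f x - f xstar) + L₁ * h ^ 2 / (2 * n) * ‖xstar - x‖ ^ 2
        + L₁ * μ ^ 2 / 2 := by
  set g := xstar - x
  set c := f x - f xstar + L₁ * μ ^ 2 / 2 with hc
  set w := h • f' x + (L₁ * h ^ 2 / 2) • g
  -- Compare with the step `t = h⟪g, u⟫`; the two terms of the bound merge into `⟪g, u⟫⟪w, u⟫`.
  have hstep : ∀ u, ‖u‖ = 1 → f (x + htilde u • u) - f xstar ≤ c + ⟪g, u⟫ * ⟪w, u⟫ := by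
    intro u hu
    have hline := le_of_minimizer_along_line_of_quadratic_upper_bound hquad hu (hls u) (h * ⟪g, u⟫)
    have happrox :=
      le_add_of_abs_sub_le_of_minimizer_along_line hdiff hconv hquad hu (hls u) (happ u)
    have hw : ⟪g, u⟫ * ⟪w, u⟫ = h * ⟪g, u⟫ * ⟪f' x, u⟫ + L₁ / 2 * (h * ⟪g, u⟫) ^ 2 := by
      simp only [w, inner_add_left, real_inner_smul_left]; ring
    linarith
  have hfirst : ⟪g, f' x⟫ ≤ f xstar - f x := by
    linarith [hconv x xstar, real_inner_comm (f' x) g]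
  have hd : (Module.finrank ℝ (EuclideanSpace ℝ (Fin n)) : ℝ) = n := by simp
  calc ∫ u, (f (x + htilde u • u) - f xstar) ∂μs ≤ ∫ u, (c + ⟪g, u⟫ * ⟪w, u⟫) ∂μs :=
        integral_mono_of_nonneg (ae_of_all _ fun u => sub_nonneg.2 (hmin _))
          ((integrable_const c).add (integrable_inner_mul_inner_of_ae_norm_eq_one hsphere g w))
          (hsphere.mono hstep)
    _ = c + (h * ⟪g, f' x⟫ + L₁ * h ^ 2 / 2 * ‖g‖ ^ 2) / n := by
        rw [integral_add (integrable_const c)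
          (integrable_inner_mul_inner_of_ae_norm_eq_one hsphere g w),
          integral_inner_mul_inner hsphere hinv, hd]
        simp [w, inner_add_right, real_inner_smul_right]
    _ ≤ c + (h * (f xstar - f x) + L₁ * h ^ 2 / 2 * ‖g‖ ^ 2) / n := by gcongr
    _ = _ := by ring

/-- Absolute-error single-step lemma with z = x*: for any h ≥ 0,
E_u[f(x₊) − f(x*)] ≤ (1 − h/n)(f(x) − f(x*)) + (L₁h²/(2n))‖x* − x‖² + L₁μ²/2. -/
theorem rp_single_step_opt (n : ℕ) (hn : 0 < n)
    (f : EuclideanSpace ℝ (Fin n) → ℝ)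
    (f' : EuclideanSpace ℝ (Fin n) → EuclideanSpace ℝ (Fin n)) (L₁ : ℝ)
    (hdiff : ∀ x, HasGradientAt f (f' x) x)
    (hconv : ∀ x y, f x + ⟪f' x, y - x⟫ ≤ f y)
    (hquad : ∀ x y, f y - f x - ⟪f' x, y - x⟫ ≤ L₁ / 2 * ‖y - x‖ ^ 2)
    (μs : Measure (EuclideanSpace ℝ (Fin n))) [IsProbabilityMeasure μs]
    (hsphere : ∀ᵐ u ∂μs, ‖u‖ = 1)
    (hinv : ∀ e : EuclideanSpace ℝ (Fin n) ≃ₗᵢ[ℝ] EuclideanSpace ℝ (Fin n), μs.map e = μs)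
    (x : EuclideanSpace ℝ (Fin n)) (μ : ℝ) (hμ : 0 ≤ μ)
    (xstar : EuclideanSpace ℝ (Fin n)) (hmin : ∀ y, f xstar ≤ f y)
    (hstar htilde : EuclideanSpace ℝ (Fin n) → ℝ)
    (hls : ∀ u, ∀ t : ℝ, f (x + hstar u • u) ≤ f (x + t • u))
    (happ : ∀ u, |htilde u - hstar u| ≤ μ)
    (h : ℝ) (hh : 0 ≤ h) :
    ∫ u, (f (x + htilde u • u) - f xstar) ∂μs ≤
      (1 - h / n) * (f x - f xstar) + L₁ * h ^ 2 / (2 * n) * ‖xstar - x‖ ^ 2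
        + L₁ * μ ^ 2 / 2 :=
  rp_single_step_opt_general n f f' L₁ hdiff hconv hquad μs hsphere hinv x μ xstar hmin hstar htilde
    hls happ h hh
end

section
/- Let f be differentiable, convex, with quadratic upper bound constant L₁, and suppose f has a unique minimizer x* satisfying f(x) − f(x*) ≥ (m/2)‖x − x*‖² for all x (local strong convexity at the optimum). Then Random Pursuit with absolute line search accuracy μ satisfies E[f(x_N) − f(x*)] ≤ (1 − m/(4 L₁ n))^N (f(x₀) − f(x*)) + 2 L₁² n μ²/m. -/
/-!
One Random Pursuit step with an inexact line search loses at most `L₁ μ² / 2` against the exact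
line minimiser, because the directional derivative vanishes there; the exact minimiser in turn
beats the step `-⟪∇f x, u⟫ / L₁` of the quadratic upper bound, which gains `⟪∇f x, u⟫² / (2 L₁)`.
For a rotation-invariant direction independent of `x`, `E ⟪g, u⟫² = ‖g‖² / n`, and convexity
with quadratic growth gives the Polyak–Łojasiewicz inequality `‖∇f x‖² ≥ m/2 (f x - f x*)`.
So the expected gap `a k = E[f x_k - f x*]` obeys `a (k+1) ≤ (1 - m / (4 L₁ n)) a k + L₁ μ² / 2`,
which unrolls to the bound.
-/

open MeasureTheory ProbabilityTheory
open scoped RealInnerProductSpace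

lemma finrank_pos_of_norm_eq_one {E : Type*} [NormedAddCommGroup E] [InnerProductSpace ℝ E]
    [FiniteDimensional ℝ E] {v : E} (hv : ‖v‖ = 1) : 0 < Module.finrank ℝ E :=
  Module.finrank_pos_iff_exists_ne_zero.mpr ⟨v, norm_ne_zero_iff.mp (by simp [hv])⟩

section SphereMoment

variable {E : Type*} [NormedAddCommGroup E] [InnerProductSpace ℝ E] [MeasurableSpace E]
  [BorelSpace E] {μ : Measure E}

lemma integrable_inner_sq_of_ae_norm_eq_one [IsFiniteMeasure μ] (hsphere : ∀ᵐ w ∂μ, ‖w‖ = 1)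
    (g : E) : Integrable (fun w => ⟪g, w⟫ ^ 2) μ := by
  refine (integrable_const (‖g‖ ^ 2)).mono' (by fun_prop) ?_
  filter_upwards [hsphere] with w hw
  have hcs : |⟪g, w⟫| ≤ ‖g‖ := (abs_real_inner_le_norm g w).trans_eq (by rw [hw, mul_one])
  simpa [abs_mul_abs_self, sq] using mul_self_le_mul_self (abs_nonneg _) hcs

lemma integral_inner_sq_linearIsometryEquiv_apply (e : E ≃ₗᵢ[ℝ] E) (he : μ.map e = μ) (g : E) :
    ∫ w, ⟪e g, w⟫ ^ 2 ∂μ = ∫ w, ⟪g, w⟫ ^ 2 ∂μ := by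
  calc ∫ w, ⟪e g, w⟫ ^ 2 ∂μ = ∫ w, ⟪e g, w⟫ ^ 2 ∂(μ.map e) := by rw [he]
    _ = ∫ w, ⟪e g, e w⟫ ^ 2 ∂μ := e.toHomeomorph.measurableEmbedding.integral_map _
    _ = ∫ w, ⟪g, w⟫ ^ 2 ∂μ := by simp_rw [LinearIsometryEquiv.inner_map_map]

lemma integral_inner_sq_of_norm_eq_one [FiniteDimensional ℝ E] [IsProbabilityMeasure μ]
    (hsphere : ∀ᵐ w ∂μ, ‖w‖ = 1) (hinv : ∀ e : E ≃ₗᵢ[ℝ] E, μ.map e = μ) {v : E} (hv : ‖v‖ = 1) :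
    ∫ w, ⟪v, w⟫ ^ 2 ∂μ = 1 / Module.finrank ℝ E := by
  set d := Module.finrank ℝ E
  have hd : 0 < d := finrank_pos_of_norm_eq_one hv
  have i₀ : Fin d := ⟨0, hd⟩
  have hv' : Orthonormal ℝ (({i₀} : Set (Fin d)).domRestrict fun _ => v) := by
    rw [orthonormal_iff_ite]; rintro ⟨i, rfl⟩ ⟨j, rfl⟩; simp [hv]
  obtain ⟨b, hb⟩ := hv'.exists_orthonormalBasis_extension_of_card_eq (Fintype.card_fin d).symm
  -- the isometry permuting `b` by a transposition carries `v = b i₀` to `b i`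
  have hsame : ∀ i, ∫ w, ⟪b i, w⟫ ^ 2 ∂μ = ∫ w, ⟪v, w⟫ ^ 2 ∂μ := fun i => by
    rw [← hb i₀ rfl, ← integral_inner_sq_linearIsometryEquiv_apply _
      (hinv (b.equiv b (Equiv.swap i₀ i)))]
    simp
  have hsum : ∑ i, ∫ w, ⟪b i, w⟫ ^ 2 ∂μ = 1 := by
    rw [← integral_finsetSum _ fun i _ => integrable_inner_sq_of_ae_norm_eq_one hsphere (b i),
      integral_congr_ae (g := fun _ => 1)
        (hsphere.mono fun w hw => by simp [b.sum_sq_inner_right, hw])]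
    simp
  simp only [hsame, Finset.sum_const, Finset.card_univ, Fintype.card_fin, nsmul_eq_mul] at hsum
  rw [eq_div_iff (Nat.cast_ne_zero.mpr hd.ne')]
  linarith

lemma integral_inner_sq [FiniteDimensional ℝ E] [IsProbabilityMeasure μ]
    (hsphere : ∀ᵐ w ∂μ, ‖w‖ = 1) (hinv : ∀ e : E ≃ₗᵢ[ℝ] E, μ.map e = μ) (g : E) :
    ∫ w, ⟪g, w⟫ ^ 2 ∂μ = ‖g‖ ^ 2 / Module.finrank ℝ E := by
  rcases eq_or_ne g 0 with rfl | hg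
  · simp
  have hunit : ‖‖g‖⁻¹ • g‖ = 1 := norm_smul_inv_norm hg
  have hscale : ∀ w, ⟪g, w⟫ ^ 2 = ‖g‖ ^ 2 * ⟪‖g‖⁻¹ • g, w⟫ ^ 2 := fun w => by
    rw [real_inner_smul_left]; field_simp
  simp_rw [hscale, integral_const_mul, integral_inner_sq_of_norm_eq_one hsphere hinv hunit]
  ring

lemma integral_inner_sq_of_indepFun [FiniteDimensional ℝ E] [IsProbabilityMeasure μ]
    (hsphere : ∀ᵐ w ∂μ, ‖w‖ = 1) (hinv : ∀ e : E ≃ₗᵢ[ℝ] E, μ.map e = μ)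
    {Ω : Type*} [MeasurableSpace Ω] {P : Measure Ω} [IsFiniteMeasure P] {V U : Ω → E}
    (hV : Measurable V) (hU : Measurable U) (hVU : IndepFun V U P) (hlaw : P.map U = μ) :
    ∫ ω, ⟪V ω, U ω⟫ ^ 2 ∂P = ∫ ω, ‖V ω‖ ^ 2 / Module.finrank ℝ E ∂P := by
  -- Tonelli for lower integrals needs no integrability of `‖V‖²`.
  have hlint : ∫⁻ ω, ENNReal.ofReal (⟪V ω, U ω⟫ ^ 2) ∂P
      = ∫⁻ ω, ENNReal.ofReal (‖V ω‖ ^ 2 / Module.finrank ℝ E) ∂P := by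
    calc ∫⁻ ω, ENNReal.ofReal (⟪V ω, U ω⟫ ^ 2) ∂P
        = ∫⁻ p, ENNReal.ofReal (⟪p.1, p.2⟫ ^ 2) ∂(P.map fun ω => (V ω, U ω)) :=
          (lintegral_map (f := fun p : E × E => ENNReal.ofReal (⟪p.1, p.2⟫ ^ 2))
            (by fun_prop) (hV.prodMk hU)).symm
      _ = ∫⁻ p, ENNReal.ofReal (⟪p.1, p.2⟫ ^ 2) ∂((P.map V).prod μ) := by
          rw [hVU.map_prod_eq_prod_map_map hV.aemeasurable hU.aemeasurable, hlaw]
      _ = ∫⁻ v, ∫⁻ w, ENNReal.ofReal (⟪v, w⟫ ^ 2) ∂μ ∂(P.map V) :=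
          lintegral_prod _ (by fun_prop)
      _ = ∫⁻ v, ENNReal.ofReal (‖v‖ ^ 2 / Module.finrank ℝ E) ∂(P.map V) := by
          congr 1; ext v
          rw [← integral_inner_sq hsphere hinv, ofReal_integral_eq_lintegral_ofReal
            (integrable_inner_sq_of_ae_norm_eq_one hsphere v) (ae_of_all _ fun _ => sq_nonneg _)]
      _ = ∫⁻ ω, ENNReal.ofReal (‖V ω‖ ^ 2 / Module.finrank ℝ E) ∂P :=
          lintegral_map (by fun_prop) hV
  rw [integral_eq_lintegral_of_nonneg_ae (ae_of_all _ fun _ => sq_nonneg _) (by fun_prop),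
    integral_eq_lintegral_of_nonneg_ae (ae_of_all _ fun _ => by positivity) (by fun_prop), hlint]

end SphereMoment

section LineSearch

variable {E : Type*} [NormedAddCommGroup E] [InnerProductSpace ℝ E] {f : E → ℝ} {f' : E → E}
  {L : ℝ}

lemma measurable_of_hasGradientAt [CompleteSpace E] [MeasurableSpace E] [BorelSpace E]
    (hdiff : ∀ x, HasGradientAt f (f' x) x) : Measurable f' := by
  rw [← gradient_eq hdiff]
  exact (InnerProductSpace.toDual ℝ E).symm.continuous.measurable.comp (measurable_fderiv ℝ f)

lemma le_add_mul_inner_add_sq_of_quadratic_upper_bound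
    (hquad : ∀ x y, f y - f x - ⟪f' x, y - x⟫ ≤ L / 2 * ‖y - x‖ ^ 2) (x : E) {u : E}
    (hu : ‖u‖ = 1) (t : ℝ) :
    f (x + t • u) ≤ f x + t * ⟪f' x, u⟫ + L / 2 * t ^ 2 := by
  have h := hquad x (x + t • u)
  rw [add_sub_cancel_left, real_inner_smul_right, norm_smul, hu, mul_one, Real.norm_eq_abs,
    sq_abs] at h
  linarith

lemma inner_eq_zero_of_forall_le_add_smul [CompleteSpace E] {x u g : E} {s : ℝ}
    (hdiff : HasGradientAt f g (x + s • u)) (hmin : ∀ t : ℝ, f (x + s • u) ≤ f (x + t • u)) :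
    ⟪g, u⟫ = 0 := by
  have hline : HasDerivAt (fun t : ℝ => x + t • u) u s := by
    simpa using ((hasDerivAt_id s).smul_const u).const_add x
  have hderiv : HasDerivAt (fun t : ℝ => f (x + t • u)) ⟪g, u⟫ s := by
    exact (hasGradientAt_iff_hasFDerivAt.mp hdiff).comp_hasDerivAt s hline
  have hlocmin : IsLocalMin (fun t : ℝ => f (x + t • u)) s :=
    (isMinOn_univ_iff.mpr hmin).isLocalMin Filter.univ_mem
  exact hlocmin.hasDerivAt_eq_zero hderiv

lemma le_sub_inner_sq_add_of_line_search [CompleteSpace E] (hL : 0 < L)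
    (hdiff : ∀ x, HasGradientAt f (f' x) x)
    (hquad : ∀ x y, f y - f x - ⟪f' x, y - x⟫ ≤ L / 2 * ‖y - x‖ ^ 2) {x u : E} (hu : ‖u‖ = 1)
    {s t μ : ℝ} (hmin : ∀ r : ℝ, f (x + s • u) ≤ f (x + r • u)) (hts : |t - s| ≤ μ) :
    f (x + t • u) ≤ f x - ⟪f' x, u⟫ ^ 2 / (2 * L) + L / 2 * μ ^ 2 := by
  have hstat : ⟪f' (x + s • u), u⟫ = 0 := inner_eq_zero_of_forall_le_add_smul (hdiff _) hmin
  have hinexact : f (x + t • u) ≤ f (x + s • u) + L / 2 * μ ^ 2 := by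
    have h := le_add_mul_inner_add_sq_of_quadratic_upper_bound hquad (x + s • u) hu (t - s)
    rw [hstat, add_assoc, ← add_smul, add_sub_cancel] at h
    have hμ : (t - s) ^ 2 ≤ μ ^ 2 := sq_le_sq' (abs_le.mp hts).1 (abs_le.mp hts).2
    nlinarith
  have hexact : f (x + s • u) ≤ f x - ⟪f' x, u⟫ ^ 2 / (2 * L) := by
    refine (hmin (-⟪f' x, u⟫ / L)).trans ?_
    refine (le_add_mul_inner_add_sq_of_quadratic_upper_bound hquad x hu _).trans_eq ?_
    field_simp
    ring
  linarith

lemma half_mul_sub_le_norm_sq_of_quadratic_growth {m : ℝ} (hm : 0 ≤ m)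
    (hconv : ∀ x y, f x + ⟪f' x, y - x⟫ ≤ f y) {xstar : E}
    (hloc : ∀ y, m / 2 * ‖y - xstar‖ ^ 2 ≤ f y - f xstar) (x : E) :
    m / 2 * (f x - f xstar) ≤ ‖f' x‖ ^ 2 := by
  have hgap : f x - f xstar ≤ ‖f' x‖ * ‖x - xstar‖ := by
    have h := hconv x xstar
    have hcs := abs_real_inner_le_norm (f' x) (xstar - x)
    rw [norm_sub_rev] at hcs
    linarith [neg_abs_le ⟪f' x, xstar - x⟫]
  have hgrowth := hloc x
  nlinarith [norm_nonneg (f' x), norm_nonneg (x - xstar),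
    sq_nonneg (m / 2 * ‖x - xstar‖ - ‖f' x‖)]

lemma norm_sq_le_two_mul_sub_of_quadratic_upper_bound (hL : 0 < L)
    (hquad : ∀ x y, f y - f x - ⟪f' x, y - x⟫ ≤ L / 2 * ‖y - x‖ ^ 2) {xstar : E}
    (hmin : ∀ y, f xstar ≤ f y) (x : E) :
    ‖f' x‖ ^ 2 ≤ 2 * L * (f x - f xstar) := by
  have h := hquad x (x - L⁻¹ • f' x)
  rw [sub_sub_cancel_left, inner_neg_right, real_inner_smul_right, real_inner_self_eq_norm_sq,
    norm_neg, norm_smul, Real.norm_eq_abs, abs_of_pos (inv_pos.mpr hL)] at h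
  have hsq : L / 2 * (L⁻¹ * ‖f' x‖) ^ 2 = L⁻¹ * ‖f' x‖ ^ 2 / 2 := by field_simp
  have hq : ‖f' x‖ ^ 2 = L * (L⁻¹ * ‖f' x‖ ^ 2) := by field_simp
  nlinarith [hmin (x - L⁻¹ • f' x)]

end LineSearch

lemma integrable_of_le_add_of_nonneg {Ω : Type*} [MeasurableSpace Ω] {P : Measure Ω}
    [IsFiniteMeasure P] {D : ℕ → Ω → ℝ} {b : ℝ} (hD₀ : Integrable (D 0) P)
    (hmeas : ∀ k, AEStronglyMeasurable (D k) P) (hnonneg : ∀ k ω, 0 ≤ D k ω)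
    (hle : ∀ k, ∀ᵐ ω ∂P, D (k + 1) ω ≤ D k ω + b) (k : ℕ) : Integrable (D k) P := by
  induction k with
  | zero => exact hD₀
  | succ k ih =>
    refine (ih.add (integrable_const b)).mono' (hmeas _) ((hle k).mono fun ω hω => ?_)
    rwa [Real.norm_of_nonneg (hnonneg _ ω)]

lemma le_one_sub_pow_mul_add_div_of_le_one_sub_mul_add {a : ℕ → ℝ} {c b : ℝ} (hc : 0 < c)
    (hc₁ : c ≤ 1) (hb : 0 ≤ b) (h : ∀ k, a (k + 1) ≤ (1 - c) * a k + b) (N : ℕ) :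
    a N ≤ (1 - c) ^ N * a 0 + b / c := by
  induction N with
  | zero => simpa using div_nonneg hb hc.le
  | succ N ih =>
    have hfix : (1 - c) * (b / c) + b = b / c := by field_simp; ring
    calc a (N + 1) ≤ (1 - c) * a N + b := h N
      _ ≤ (1 - c) * ((1 - c) ^ N * a 0 + b / c) + b := by gcongr
      _ = (1 - c) ^ (N + 1) * a 0 + b / c := by linear_combination hfix

section ExpectedDescent

variable {E : Type*} [NormedAddCommGroup E] [InnerProductSpace ℝ E] [FiniteDimensional ℝ E]
  [MeasurableSpace E] [BorelSpace E] {μ : Measure E} [IsProbabilityMeasure μ]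
  {Ω : Type*} [MeasurableSpace Ω] {P : Measure Ω} [IsProbabilityMeasure P]

lemma integral_le_one_sub_mul_integral_add_of_indepFun
    (hsphere : ∀ᵐ w ∂μ, ‖w‖ = 1) (hinv : ∀ e : E ≃ₗᵢ[ℝ] E, μ.map e = μ)
    {D D' : Ω → ℝ} {G U : Ω → E} {L m b : ℝ} (hL : 0 < L)
    (hG : Measurable G) (hU : Measurable U) (hGU : IndepFun G U P) (hlaw : P.map U = μ)
    (hD : Integrable D P) (hD' : Integrable D' P)
    (hGD : ∀ ω, ‖G ω‖ ^ 2 ≤ 2 * L * D ω) (hpl : ∀ ω, m / 2 * D ω ≤ ‖G ω‖ ^ 2)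
    (hstep : ∀ᵐ ω ∂P, D' ω ≤ D ω - ⟪G ω, U ω⟫ ^ 2 / (2 * L) + b) :
    ∫ ω, D' ω ∂P ≤ (1 - m / (4 * L * Module.finrank ℝ E)) * ∫ ω, D ω ∂P + b := by
  set d : ℝ := (Module.finrank ℝ E : ℝ)
  have hU1 : ∀ᵐ ω ∂P, ‖U ω‖ = 1 := ae_of_ae_map hU.aemeasurable (by rwa [hlaw])
  have hGint : Integrable (fun ω => ‖G ω‖ ^ 2) P :=
    (hD.const_mul (2 * L)).mono' (by fun_prop) (ae_of_all _ fun ω => by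
      rw [Real.norm_of_nonneg (sq_nonneg _)]; exact hGD ω)
  have hGUint : Integrable (fun ω => ⟪G ω, U ω⟫ ^ 2) P := by
    refine hGint.mono' (by fun_prop) (hU1.mono fun ω hω => ?_)
    rw [Real.norm_of_nonneg (sq_nonneg _), ← sq_abs]
    exact pow_le_pow_left₀ (abs_nonneg _)
      ((abs_real_inner_le_norm _ _).trans_eq (by simp [hω])) 2
  have hPL : m / 2 * ∫ ω, D ω ∂P ≤ ∫ ω, ‖G ω‖ ^ 2 ∂P := by
    rw [← integral_const_mul]; exact integral_mono (hD.const_mul _) hGint hpl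
  have hmoment : ∫ ω, ⟪G ω, U ω⟫ ^ 2 ∂P = (∫ ω, ‖G ω‖ ^ 2 ∂P) / d := by
    rw [integral_inner_sq_of_indepFun hsphere hinv hG hU hGU hlaw, integral_div]
  have hsub : Integrable (fun ω => D ω - ⟪G ω, U ω⟫ ^ 2 / (2 * L)) P :=
    hD.sub (hGUint.div_const _)
  have hdecrease : m / (4 * L * d) * ∫ ω, D ω ∂P ≤ (∫ ω, ‖G ω‖ ^ 2 ∂P) / d / (2 * L) :=
    calc m / (4 * L * d) * ∫ ω, D ω ∂P = m / 2 * (∫ ω, D ω ∂P) / d / (2 * L) := by ring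
      _ ≤ (∫ ω, ‖G ω‖ ^ 2 ∂P) / d / (2 * L) := by gcongr
  calc ∫ ω, D' ω ∂P ≤ ∫ ω, (D ω - ⟪G ω, U ω⟫ ^ 2 / (2 * L) + b) ∂P :=
        integral_mono_ae hD' (hsub.add (integrable_const b)) hstep
    _ = ∫ ω, D ω ∂P - (∫ ω, ‖G ω‖ ^ 2 ∂P) / d / (2 * L) + b := by
        rw [integral_add hsub (integrable_const b), integral_sub hD (hGUint.div_const _),
          integral_div, hmoment]
        simp
    _ ≤ (1 - m / (4 * L * d)) * ∫ ω, D ω ∂P + b := by linarith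

lemma integral_le_one_sub_pow_mul_add_of_indepFun
    (hsphere : ∀ᵐ w ∂μ, ‖w‖ = 1) (hinv : ∀ e : E ≃ₗᵢ[ℝ] E, μ.map e = μ)
    {D : ℕ → Ω → ℝ} {G U : ℕ → Ω → E} {L m b : ℝ} (hm : 0 < m) (hmL : m ≤ L) (hb : 0 ≤ b)
    (hG : ∀ k, Measurable (G k)) (hU : ∀ k, Measurable (U k))
    (hGU : ∀ k, IndepFun (G k) (U k) P) (hlaw : ∀ k, P.map (U k) = μ)
    (hD₀ : Integrable (D 0) P) (hDmeas : ∀ k, AEStronglyMeasurable (D k) P)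
    (hGD : ∀ k ω, ‖G k ω‖ ^ 2 ≤ 2 * L * D k ω) (hpl : ∀ k ω, m / 2 * D k ω ≤ ‖G k ω‖ ^ 2)
    (hstep : ∀ k, ∀ᵐ ω ∂P, D (k + 1) ω ≤ D k ω - ⟪G k ω, U k ω⟫ ^ 2 / (2 * L) + b) (N : ℕ) :
    ∫ ω, D N ω ∂P ≤ (1 - m / (4 * L * Module.finrank ℝ E)) ^ N * ∫ ω, D 0 ω ∂P
      + b / (m / (4 * L * Module.finrank ℝ E)) := by
  have hL : 0 < L := hm.trans_le hmL
  have hd : (1 : ℝ) ≤ Module.finrank ℝ E :=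
    Nat.one_le_cast.mpr (finrank_pos_of_norm_eq_one hsphere.exists.choose_spec)
  have hnonneg : ∀ k ω, 0 ≤ D k ω := fun k ω =>
    (mul_nonneg_iff_of_pos_left (by positivity)).mp ((sq_nonneg _).trans (hGD k ω))
  have hint : ∀ k, Integrable (D k) P :=
    integrable_of_le_add_of_nonneg hD₀ hDmeas hnonneg fun k => (hstep k).mono fun ω hω => by
      linarith [div_nonneg (sq_nonneg ⟪G k ω, U k ω⟫) (by positivity : (0 : ℝ) ≤ 2 * L)]
  have hc₁ : m / (4 * L * Module.finrank ℝ E) ≤ 1 := by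
    rw [div_le_one (by positivity)]
    nlinarith
  exact le_one_sub_pow_mul_add_div_of_le_one_sub_mul_add (a := fun k => ∫ ω, D k ω ∂P)
    (by positivity) hc₁ hb (fun k => integral_le_one_sub_mul_integral_add_of_indepFun hsphere
      hinv hL (hG k) (hU k) (hGU k) (hlaw k) (hint k) (hint (k + 1)) (hGD k) (hpl k) (hstep k)) N

end ExpectedDescent

theorem rp_convergence_locally_strongly_convex_general (n : ℕ)
    (f : EuclideanSpace ℝ (Fin n) → ℝ)
    (f' : EuclideanSpace ℝ (Fin n) → EuclideanSpace ℝ (Fin n))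
    (L₁ m : ℝ) (hm : 0 < m) (hmL : m ≤ L₁)
    (hdiff : ∀ x, HasGradientAt f (f' x) x)
    (hconv : ∀ x y, f x + ⟪f' x, y - x⟫ ≤ f y)
    (hquad : ∀ x y, f y - f x - ⟪f' x, y - x⟫ ≤ L₁ / 2 * ‖y - x‖ ^ 2)
    (xstar : EuclideanSpace ℝ (Fin n))
    (hloc : ∀ y, m / 2 * ‖y - xstar‖ ^ 2 ≤ f y - f xstar)
    (μs : Measure (EuclideanSpace ℝ (Fin n))) [IsProbabilityMeasure μs]
    (hsphere : ∀ᵐ u ∂μs, ‖u‖ = 1)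
    (hinv : ∀ e : EuclideanSpace ℝ (Fin n) ≃ₗᵢ[ℝ] EuclideanSpace ℝ (Fin n), μs.map e = μs)
    (Ω : Type*) [MeasurableSpace Ω] (P : Measure Ω) [IsProbabilityMeasure P]
    (x u : ℕ → Ω → EuclideanSpace ℝ (Fin n)) (hstar htilde : ℕ → Ω → ℝ)
    (μ : ℝ)
    (x₀ : EuclideanSpace ℝ (Fin n)) (hx0 : ∀ ω, x 0 ω = x₀)
    (hxsucc : ∀ k ω, x (k + 1) ω = x k ω + htilde k ω • u k ω)
    (hls : ∀ k ω, ∀ t : ℝ, f (x k ω + hstar k ω • u k ω) ≤ f (x k ω + t • u k ω))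
    (happ : ∀ k ω, |htilde k ω - hstar k ω| ≤ μ)
    (hmeasx : ∀ k, Measurable (x k)) (hmeasu : ∀ k, Measurable (u k))
    (hlaw : ∀ k, P.map (u k) = μs)
    (hindep : ∀ k, IndepFun (x k) (u k) P)
    (N : ℕ) :
    ∫ ω, (f (x N ω) - f xstar) ∂P ≤
      (1 - m / (4 * L₁ * n)) ^ N * (f x₀ - f xstar) + 2 * L₁ ^ 2 * n * μ ^ 2 / m := by
  have hL : 0 < L₁ := hm.trans_le hmL
  have hmin : ∀ y, f xstar ≤ f y := fun y => by nlinarith [hloc y, sq_nonneg ‖y - xstar‖]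
  have hf : Continuous f :=
    continuous_iff_continuousAt.mpr fun y => (hdiff y).differentiableAt.continuousAt
  have hf' : Measurable f' := measurable_of_hasGradientAt hdiff
  have hstep : ∀ k, ∀ᵐ ω ∂P, f (x (k + 1) ω) - f xstar ≤
      f (x k ω) - f xstar - ⟪f' (x k ω), u k ω⟫ ^ 2 / (2 * L₁) + L₁ / 2 * μ ^ 2 := fun k => by
    filter_upwards [ae_of_ae_map (hmeasu k).aemeasurable (by rwa [hlaw k])] with ω hω
    rw [hxsucc]
    linarith [le_sub_inner_sq_add_of_line_search hL hdiff hquad hω (hls k ω) (happ k ω)]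
  have key := integral_le_one_sub_pow_mul_add_of_indepFun
    (D := fun k ω => f (x k ω) - f xstar) hsphere hinv hm hmL (by positivity)
    (fun k => hf'.comp (hmeasx k)) hmeasu (fun k => (hindep k).comp hf' measurable_id) hlaw
    (by simp [hx0])
    (fun k => ((hf.measurable.comp (hmeasx k)).sub_const _).aestronglyMeasurable)
    (fun k ω => norm_sq_le_two_mul_sub_of_quadratic_upper_bound hL hquad hmin _)
    (fun k ω => half_mul_sub_le_norm_sq_of_quadratic_growth hm.le hconv hloc _) hstep N
  have hgap₀ : ∫ ω, (f (x 0 ω) - f xstar) ∂P = f x₀ - f xstar := by simp [hx0]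
  have hbias : L₁ / 2 * μ ^ 2 / (m / (4 * L₁ * n)) = 2 * L₁ ^ 2 * n * μ ^ 2 / m := by
    rw [div_div_eq_mul_div]; ring
  rwa [finrank_euclideanSpace_fin, hgap₀, hbias] at key

/-- Linear convergence of Random Pursuit under local strong convexity at the optimum:
E[f(x_N) − f(x*)] ≤ (1 − m/(4L₁n))^N (f(x₀) − f(x*)) + 2L₁²nμ²/m. -/
theorem rp_convergence_locally_strongly_convex (n : ℕ) (hn : 0 < n)
    (f : EuclideanSpace ℝ (Fin n) → ℝ)
    (f' : EuclideanSpace ℝ (Fin n) → EuclideanSpace ℝ (Fin n))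
    (L₁ m : ℝ) (hm : 0 < m) (hmL : m ≤ L₁)
    (hdiff : ∀ x, HasGradientAt f (f' x) x)
    (hconv : ∀ x y, f x + ⟪f' x, y - x⟫ ≤ f y)
    (hquad : ∀ x y, f y - f x - ⟪f' x, y - x⟫ ≤ L₁ / 2 * ‖y - x‖ ^ 2)
    (xstar : EuclideanSpace ℝ (Fin n)) (hmin : ∀ y, f xstar ≤ f y)
    (huniq : ∀ y, f y = f xstar → y = xstar)
    (hloc : ∀ y, m / 2 * ‖y - xstar‖ ^ 2 ≤ f y - f xstar)
    (μs : Measure (EuclideanSpace ℝ (Fin n))) [IsProbabilityMeasure μs]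
    (hsphere : ∀ᵐ u ∂μs, ‖u‖ = 1)
    (hinv : ∀ e : EuclideanSpace ℝ (Fin n) ≃ₗᵢ[ℝ] EuclideanSpace ℝ (Fin n), μs.map e = μs)
    (Ω : Type*) [MeasurableSpace Ω] (P : Measure Ω) [IsProbabilityMeasure P]
    (x u : ℕ → Ω → EuclideanSpace ℝ (Fin n)) (hstar htilde : ℕ → Ω → ℝ)
    (μ : ℝ) (hμ : 0 ≤ μ)
    (x₀ : EuclideanSpace ℝ (Fin n)) (hx0 : ∀ ω, x 0 ω = x₀)
    (hxsucc : ∀ k ω, x (k + 1) ω = x k ω + htilde k ω • u k ω)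
    (hls : ∀ k ω, ∀ t : ℝ, f (x k ω + hstar k ω • u k ω) ≤ f (x k ω + t • u k ω))
    (happ : ∀ k ω, |htilde k ω - hstar k ω| ≤ μ)
    (hmeasx : ∀ k, Measurable (x k)) (hmeasu : ∀ k, Measurable (u k))
    (hlaw : ∀ k, P.map (u k) = μs)
    (hindep : ∀ k, IndepFun (x k) (u k) P)
    (N : ℕ) :
    ∫ ω, (f (x N ω) - f xstar) ∂P ≤
      (1 - m / (4 * L₁ * n)) ^ N * (f x₀ - f xstar) + 2 * L₁ ^ 2 * n * μ ^ 2 / m :=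
  rp_convergence_locally_strongly_convex_general n f f' L₁ m hm hmL hdiff hconv hquad xstar hloc μs
    hsphere hinv Ω P x u hstar htilde μ x₀ hx0 hxsucc hls happ hmeasx hmeasu hlaw hindep N
end
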